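/- Let A = (Q, Σ) be a synchronizing DFA with |Σ| ≥ 2, let b ∈ Σ and q0 ∈ Q be fixed, and let D be the duplication of A with respect to b and q0. Then Alice has a winning strategy in the synchronization game on D. -/
import Mathlib


/-- Apply a word (list of letters) to a state of a DFA with transition function `δ`. -/
def applyWord {Q A : Type*} (δ : Q → A → Q) (q : Q) : List A → Q
  | [] => q
  | a :: w => applyWord δ (δ q a) w

/-- The history (list) of letters played after `n` moves of the synchronization game,
when Alice uses strategy `σA` and Bob uses strategy `σB`; Alice moves first, i.e.
the letters at even indices are chosen by Alice and those at odd indices by Bob. -/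
def playHist {A : Type*} (σA σB : List A → A) : ℕ → List A
  | 0 => []
  | n + 1 =>
      let h := playHist σA σB n
      h ++ [if n % 2 = 0 then σA h else σB h]

/-- `w` synchronizes the position `P` (a set of states holding coins) to a single state. -/
def IsResetFrom {Q A : Type*} [DecidableEq Q] (δ : Q → A → Q) (P : Finset Q)
    (w : List A) : Prop :=
  (P.image fun q => applyWord δ q w).card = 1

/-- Alice has a winning strategy in the synchronization game starting from position `P`. -/
def AliceWins {Q A : Type*} [DecidableEq Q] (δ : Q → A → Q) (P : Finset Q) : Prop :=
  ∃ σA : List A → A, ∀ σB : List A → A, ∃ k : ℕ,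
    IsResetFrom δ P (playHist σA σB k)

/-- Alice has a strategy in the synchronization game starting from position `P` that
guarantees reaching a singleton position in a play in which Alice has chosen at most
`m` letters (after `k` letters in total, Alice has chosen `(k + 1) / 2` of them). -/
def AliceWinsWithin {Q A : Type*} [DecidableEq Q] (δ : Q → A → Q) (P : Finset Q)
    (m : ℕ) : Prop :=
  ∃ σA : List A → A, ∀ σB : List A → A, ∃ k : ℕ,
    IsResetFrom δ P (playHist σA σB k) ∧ (k + 1) / 2 ≤ m

/-- Bob has a winning strategy in the synchronization game starting from position `P`:
against every strategy of Alice the position never becomes a singleton. -/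
def BobWins {Q A : Type*} [DecidableEq Q] (δ : Q → A → Q) (P : Finset Q) : Prop :=
  ∃ σB : List A → A, ∀ σA : List A → A, ∀ k : ℕ,
    ¬ IsResetFrom δ P (playHist σA σB k)

/-- The duplication of the DFA `δ` with respect to the letter `b` and the state `q0`:
states are `Q × Bool` (with `false` for `0` and `true` for `1`), and
`(q, 0)·a = (q·a, 1)`, `(q, 1)·b = (q, 0)`, `(q, 1)·a = (q0, 1)` for `a ≠ b`. -/
def dup {Q A : Type*} [DecidableEq A] (δ : Q → A → Q) (b : A) (q0 : Q) :
    Q × Bool → A → Q × Bool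
  | (q, false), a => (δ q a, true)
  | (q, true), a => if a = b then (q, false) else (q0, true)

lemma applyWord_append {Q A : Type*} (δ : Q → A → Q) (q : Q) (u v : List A) :
    applyWord δ q (u ++ v) = applyWord δ (applyWord δ q u) v := by
  induction u generalizing q with
  | nil => rfl
  | cons a u ih => simp [applyWord, ih]

lemma dup_false {Q A : Type*} [DecidableEq A] (δ : Q → A → Q) (b : A) (q0 : Q)
    (q : Q) (x : A) : dup δ b q0 (q, false) x = (δ q x, true) := rfl

lemma dup_true {Q A : Type*} [DecidableEq A] (δ : Q → A → Q) (b : A) (q0 : Q)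
    (q : Q) (x : A) : dup δ b q0 (q, true) x = if x = b then (q, false) else (q0, true) := rfl

lemma playHist_length {A : Type*} (σA σB : List A → A) (n : ℕ) :
    (playHist σA σB n).length = n := by
  induction n with
  | zero => rfl
  | succ n ih => simp [playHist, ih]

/-- If `δ` is a synchronizing DFA with at least two input letters, then Alice has a winning
strategy in the synchronization game on the duplication of `δ` (w.r.t. `b` and `q0`). -/
theorem alice_wins_on_duplication {Q A : Type*} [Fintype Q] [DecidableEq Q]
    [Fintype A] [DecidableEq A] (δ : Q → A → Q) (b : A) (q0 : Q)
    (hA : 2 ≤ Fintype.card A)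
    (hsync : ∃ w : List A, IsResetFrom δ Finset.univ w) :
    AliceWins (dup δ b q0) Finset.univ := by
  classical
  obtain ⟨w, hw⟩ := hsync
  obtain ⟨a, ha⟩ := Fintype.exists_ne_of_one_lt_card hA b
  set m := w.length with hm
  set σA : List A → A := fun l => if l.length = 0 then a else w.getD (l.length / 2 - 1) b
    with hσA
  refine ⟨σA, ?_⟩
  intro σB
  set d : Q × Bool → A → Q × Bool := dup δ b q0 with hd
  set h : ℕ → List A := playHist σA σB with hh
  set Pos : ℕ → Finset (Q × Bool) :=
    fun n => Finset.univ.image fun s => applyWord d s (h n) with hPos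
  have hQne : (Finset.univ : Finset Q).Nonempty := by
    by_contra hc
    rw [Finset.not_nonempty_iff_eq_empty] at hc
    rw [IsResetFrom, hc] at hw
    simp at hw
  -- the position evolves by one letter
  have hstep : ∀ n, Pos (n + 1) =
      (Pos n).image fun s => d s (if n % 2 = 0 then σA (h n) else σB (h n)) := by
    intro n
    have hlist : h (n + 1) = h n ++ [if n % 2 = 0 then σA (h n) else σB (h n)] := by
      simp [hh, playHist]
    have e : (fun s : Q × Bool => applyWord d s (h (n + 1))) =
        (fun s => d s (if n % 2 = 0 then σA (h n) else σB (h n))) ∘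
          fun s : Q × Bool => applyWord d s (h n) := by
      funext s
      show applyWord d s (h (n + 1)) =
        d (applyWord d s (h n)) (if n % 2 = 0 then σA (h n) else σB (h n))
      rw [hlist, applyWord_append]
      rfl
    simp only [hPos]
    rw [e, ← Finset.image_image]
  set S0 : Finset Q := Finset.univ.image (fun q => δ q a) ∪ {q0} with hS0
  have hS0ne : S0.Nonempty := ⟨q0, by simp [hS0]⟩
  set T : ℕ → Finset Q := fun j => S0.image fun q => applyWord δ q (w.take j) with hT
  have hTne : ∀ j, (T j).Nonempty := fun j => hS0ne.image _
  have hσA0 : σA (h 0) = a := by simp [hh, playHist, hσA]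
  have hσAeven : ∀ j, σA (h (2 * j + 2)) = w.getD j b := by
    intro j
    rw [hσA]
    simp only [hh, playHist_length]
    have hne : ¬ (2 * j + 2 = 0) := by omega
    rw [if_neg hne]
    congr 1
    omega
  have hP0 : Pos 0 = Finset.univ := by
    simp [hPos, hh, playHist, applyWord]
  have huniv : (Finset.univ : Finset (Q × Bool)) =
      Finset.univ.image (fun q : Q => (q, false)) ∪
        Finset.univ.image (fun q : Q => (q, true)) := by
    ext ⟨q, c⟩
    cases c <;> simp
  have hPos1 : Pos 1 = S0.image fun q => (q, true) := by
    rw [hstep 0]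
    have h0 : (if 0 % 2 = 0 then σA (h 0) else σB (h 0)) = a := by rw [if_pos rfl, hσA0]
    rw [h0, hP0, huniv, Finset.image_union, Finset.image_image, Finset.image_image]
    have e1 : ((fun s => d s a) ∘ fun q : Q => (q, false)) = fun q : Q => (δ q a, true) := rfl
    have e2 : ((fun s => d s a) ∘ fun q : Q => (q, true)) = fun _ : Q => (q0, true) := by
      funext q
      show dup δ b q0 (q, true) a = (q0, true)
      rw [dup_true, if_neg ha]
    rw [e1, e2, hS0, Finset.image_union, Finset.image_image, Finset.image_singleton,
      Finset.image_const hQne]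
    rfl
  -- key invariant: as long as Bob echoes b, Alice spells out w
  have key : ∀ j, j ≤ m → (∀ i, i < j → σB (h (2 * i + 1)) = b) →
      Pos (2 * j + 1) = (T j).image fun q => (q, true) := by
    intro j
    induction j with
    | zero =>
      intro _ _
      rw [hPos1]
      have : T 0 = S0 := by
        rw [hT]
        simp [applyWord]
      rw [this]
    | succ j ih =>
      intro hjm hgood
      have hj : j < m := by omega
      have hPodd := ih (by omega) (fun i hi => hgood i (by omega))
      have hBob : σB (h (2 * j + 1)) = b := hgood j (by omega)
      have hodd : ¬ ((2 * j + 1) % 2 = 0) := by omega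
      have hPeven : Pos (2 * j + 2) = (T j).image fun q => (q, false) := by
        have e : ((fun s => d s b) ∘ fun q : Q => (q, true)) = fun q : Q => (q, false) := by
          funext q
          show dup δ b q0 (q, true) b = (q, false)
          rw [dup_true, if_pos rfl]
        rw [show 2 * j + 2 = (2 * j + 1) + 1 by ring, hstep (2 * j + 1), if_neg hodd,
          hBob, hPodd, Finset.image_image, e]
      have heven : (2 * j + 2) % 2 = 0 := by omega
      have hwj : w.getD j b = w[j]'hj := List.getD_eq_getElem w b hj
      have hT1 : T (j + 1) = (T j).image fun q => δ q (w[j]'hj) := by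
        have htake : w.take (j + 1) = w.take j ++ [w[j]'hj] := by
          rw [List.take_succ, List.getElem?_eq_getElem hj]
          rfl
        have e : ((fun q => δ q (w[j]'hj)) ∘ fun q => applyWord δ q (w.take j)) =
            fun q => applyWord δ q (w.take (j + 1)) := by
          funext q
          rw [htake, applyWord_append]
          rfl
        rw [hT]
        simp only [Finset.image_image]
        rw [e]
      rw [show 2 * (j + 1) + 1 = (2 * j + 2) + 1 by ring, hstep (2 * j + 2),
        if_pos heven, hσAeven j, hwj, hPeven, hT1]
      simp only [Finset.image_image]
      rfl
  by_cases hgood : ∀ i, i < m → σB (h (2 * i + 1)) = b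
  · -- Bob always replies b; the word w synchronizes
    refine ⟨2 * m + 1, ?_⟩
    show (Finset.univ.image fun s =>
      applyWord (dup δ b q0) s (playHist σA σB (2 * m + 1))).card = 1
    have hk := key m le_rfl hgood
    have hcard : (Pos (2 * m + 1)).card = (T m).card := by
      rw [hk]
      exact Finset.card_image_of_injective _ (fun x y hxy => by simpa using hxy)
    have hTm : (T m).card = 1 := by
      have hsub : T m ⊆ Finset.univ.image fun q => applyWord δ q w := by
        rw [hT]
        simp only [hm, List.take_length]
        exact Finset.image_subset_image (Finset.subset_univ S0)
      have hle : (T m).card ≤ 1 := by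
        have h1 := Finset.card_le_card hsub
        rw [IsResetFrom] at hw
        omega
      have hge : 1 ≤ (T m).card := (hTne m).card_pos
      omega
    have hfin : (Pos (2 * m + 1)).card = 1 := by rw [hcard, hTm]
    exact hfin
  · -- Bob deviates at some first moment; the position collapses to (q0, true)
    push_neg at hgood
    have hex : ∃ i, i < m ∧ σB (h (2 * i + 1)) ≠ b := hgood
    set i0 := Nat.find hex with hi0
    obtain ⟨hi0m, hi0b⟩ := Nat.find_spec hex
    have hpre : ∀ i, i < i0 → σB (h (2 * i + 1)) = b := by
      intro i hi
      have hmin := Nat.find_min hex hi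
      push_neg at hmin
      exact hmin (by omega)
    have hPodd := key i0 (le_of_lt hi0m) hpre
    have hodd : ¬ ((2 * i0 + 1) % 2 = 0) := by omega
    refine ⟨2 * i0 + 2, ?_⟩
    show (Finset.univ.image fun s =>
      applyWord (dup δ b q0) s (playHist σA σB (2 * i0 + 2))).card = 1
    have hcol : Pos (2 * i0 + 2) = {(q0, true)} := by
      have e : ((fun s => d s (σB (h (2 * i0 + 1)))) ∘ fun q : Q => (q, true)) =
          fun _ : Q => (q0, true) := by
        funext q
        show dup δ b q0 (q, true) (σB (h (2 * i0 + 1))) = (q0, true)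
        rw [dup_true, if_neg hi0b]
      rw [show 2 * i0 + 2 = (2 * i0 + 1) + 1 by ring, hstep (2 * i0 + 1), if_neg hodd,
        hPodd, Finset.image_image, e, Finset.image_const (hTne i0)]
    have hfin : (Pos (2 * i0 + 2)).card = 1 := by rw [hcol]; simp
    exact hfin
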